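/- Under the hypotheses that C is countably extensive with pullback-stable strong epimorphisms, binary meets of subobjects distribute over countable joins: P ∧ (⋁ₙ Pₙ) = ⋁ₙ (P ∧ Pₙ) in the subobject lattice of any object Y. -/

import Mathlib

open CategoryTheory CategoryTheory.Limits

universe v u

variable {C : Type u} [Category.{v} C]

/-- The canonical functor `∏ₙ C/Xₙ ⥤ C/∐ₙ Xₙ` taking countable coproducts of morphisms;
`C` is countably extensive if this is an equivalence for every countable family. -/
noncomputable def countExtFunctor [HasCountableCoproducts C] (X : ℕ → C) :
    (∀ n : ℕ, Over (X n)) ⥤ Over (∐ X) where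
  obj p := Over.mk (Limits.Sigma.map fun n => (p n).hom)
  map {p q} f := Over.homMk (Limits.Sigma.map fun n => (f n).left) (by dsimp; apply Limits.Sigma.hom_ext; intro n; simp)

/-!
`⋁ₙ Pₙ` is the image of `∐ₙ Pₙ ⟶ Y`, so pulling the strong epi `∐ₙ Pₙ ⟶ ⋁ₙ Pₙ` back along
`Q := P ⊓ ⋁ₙ Pₙ ⟶ ⋁ₙ Pₙ` gives a strong epi `W ⟶ Q` together with a map `W ⟶ ∐ₙ Pₙ`.
Extensivity splits the latter as `∐ₙ Wₙ ⟶ ∐ₙ Pₙ`; each `Wₙ` then maps into both `P` and `Pₙ`,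
hence into `P ⊓ Pₙ`, and the strong epi `∐ₙ Wₙ ⟶ Q` lifts against the mono `⋁ₙ (P ⊓ Pₙ) ⟶ Y`.
-/

namespace CategoryTheory.Subobject

theorem le_of_strongEpi_of_factors {Y W : C} {Q K : Subobject Y} (g : W ⟶ Q) [StrongEpi g]
    (h : K.Factors (g ≫ Q.arrow)) : Q ≤ K :=
  let sq : CommSq (K.factorThru _ h) g K.arrow Q.arrow := ⟨factorThru_arrow _ _ h⟩
  le_of_comm sq.lift sq.fac_right

theorem factors_of_forall_ι_comp_factors {ι : Type*} {Y : C} {Z : ι → C} [HasCoproduct Z]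
    {K : Subobject Y} (φ : ∐ Z ⟶ Y) (h : ∀ i, K.Factors (Limits.Sigma.ι Z i ≫ φ)) :
    K.Factors φ := by
  have hφ : (Limits.Sigma.desc fun i => K.factorThru _ (h i)) ≫ K.arrow = φ := by
    ext i; simp
  exact hφ ▸ factors_comp_arrow _

instance strongEpi_factorThruImageSubobject [HasImages C] [HasStrongEpiImages C] {X Y : C}
    (f : X ⟶ Y) : StrongEpi (factorThruImageSubobject f) := by
  unfold factorThruImageSubobject
  infer_instance

theorem le_imageSubobject_sigmaDesc {ι : Type*} {Y : C}
    (P : ι → Subobject Y) [HasCoproduct fun i => (P i : C)]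
    [HasImage (Limits.Sigma.desc fun i => (P i).arrow)] (i : ι) :
    P i ≤ imageSubobject (Limits.Sigma.desc fun i => (P i).arrow) :=
  le_of_factors <| by
    simpa using imageSubobject_factors_comp_self (Limits.Sigma.desc fun i => (P i).arrow)
      (Limits.Sigma.ι _ i)

end CategoryTheory.Subobject

theorem exists_strongEpi_cover_of_le_imageSubobject [HasPullbacks C] [HasImages C]
    [HasStrongEpiImages C]
    (hstab : ∀ {P X Y Z : C} (fst : P ⟶ X) (snd : P ⟶ Y) (f : X ⟶ Z) (g : Y ⟶ Z),
      IsPullback fst snd f g → StrongEpi g → StrongEpi fst)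
    {A Y : C} (f : A ⟶ Y) {Q : Subobject Y} (hQ : Q ≤ imageSubobject f) :
    ∃ (W : C) (g : W ⟶ Q) (k : W ⟶ A), StrongEpi g ∧ g ≫ Q.arrow = k ≫ f := by
  let u := Subobject.ofLE Q _ hQ
  have hpb := (IsPullback.of_hasPullback (factorThruImageSubobject f) u).flip
  refine ⟨_, pullback.snd _ u, pullback.fst _ u, hstab _ _ _ _ hpb inferInstance, ?_⟩
  rw [← Subobject.ofLE_arrow hQ, ← pullback.condition_assoc, imageSubobject_arrow_comp]

theorem exists_sigmaIso_of_countExtFunctor_essSurj [HasCountableCoproducts C] {X : ℕ → C}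
    [(countExtFunctor X).EssSurj] {W : C} (k : W ⟶ ∐ X) :
    ∃ (p : ∀ n, Over (X n)) (e : ∐ (fun n => (p n).left) ≅ W),
      e.hom ≫ k = Limits.Sigma.map fun n => (p n).hom := by
  let e := (countExtFunctor X).objObjPreimageIso (Over.mk k)
  exact ⟨_, (Over.forget _).mapIso e, Over.w e.hom⟩

/-- If `C` is countably extensive with pullback-stable strong epimorphisms, then binary
meets of subobjects distribute over countable joins:
`P ⊓ (⋁ₙ Pₙ) = ⋁ₙ (P ⊓ Pₙ)` in the subobject lattice of any object `Y`. -/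
theorem inf_distrib_countable_joins
    [WellPowered.{v} C] [HasPullbacks C] [HasCoproducts.{v} C] [HasCountableCoproducts C]
    [HasStrongEpiMonoFactorisations C]
    (hext : ∀ X : ℕ → C, (countExtFunctor X).IsEquivalence)
    (hstab : ∀ {P X Y Z : C} (fst : P ⟶ X) (snd : P ⟶ Y) (f : X ⟶ Z) (g : Y ⟶ Z),
      IsPullback fst snd f g → StrongEpi g → StrongEpi fst)
    {Y : C} (P : Subobject Y) (Pn : ℕ → Subobject Y) :
    letI := Subobject.completeSemilatticeSup.{v} (C := C) (B := Y)
    P ⊓ (⨆ n, Pn n) = ⨆ n, P ⊓ Pn n := by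
  let := Subobject.completeSemilatticeSup.{v} (C := C) (B := Y)
  -- `Subobject Y` is only a `CompleteSemilatticeSup`, so `le_iSup` and `iSup_le` do not apply.
  have hlub (f : ℕ → Subobject Y) : IsLUB (Set.range f) (⨆ n, f n) := isLUB_sSup _
  refine le_antisymm ?_ ((hlub _).2 ?_)
  · let f := Limits.Sigma.desc fun n => (Pn n).arrow
    have hjoin : ⨆ n, Pn n ≤ imageSubobject f :=
      (hlub Pn).2 (Set.forall_mem_range.2 (Subobject.le_imageSubobject_sigmaDesc Pn))
    obtain ⟨W, g, k, _, hgk⟩ := exists_strongEpi_cover_of_le_imageSubobject hstab f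
      (inf_le_right.trans hjoin)
    have := hext (fun n => (Pn n : C))
    obtain ⟨p, e, he⟩ := exists_sigmaIso_of_countExtFunctor_essSurj k
    refine Subobject.le_of_strongEpi_of_factors (e.hom ≫ g)
      (Subobject.factors_of_forall_ι_comp_factors _ fun n => ?_)
    have hn : Limits.Sigma.ι _ n ≫ (e.hom ≫ g) ≫ (P ⊓ ⨆ n, Pn n).arrow
        = (p n).hom ≫ (Pn n).arrow := by
      simp [hgk, reassoc_of% he, f]
    have hP : P.Factors ((p n).hom ≫ (Pn n).arrow) := by
      rw [← hn, ← Category.assoc]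
      exact Subobject.factors_left_of_inf_factors (Subobject.factors_comp_arrow _)
    rw [hn]
    exact Subobject.factors_of_le _ ((hlub _).1 ⟨n, rfl⟩)
      ((Subobject.inf_factors _).2 ⟨hP, Subobject.factors_comp_arrow _⟩)
  · rintro _ ⟨n, rfl⟩
    exact le_inf inf_le_left (inf_le_right.trans ((hlub _).1 ⟨n, rfl⟩))
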